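/- arXiv:1710.08111 — 3 statements merged into one kernel-verified Lean document; each statement's English description precedes it below -/
import Mathlib

section
/- Let F be a one-sided CA over a finite alphabet A which is nilpotent, i.e., there is a quiescent state q such that for every configuration c there is some n with F^n(c) = const q. Then F is uniformly nilpotent: there exists a single n ∈ ℕ such that F^n(c) = const q for ALL configurations c : ℕ → A. -/
/-!
The sets `{c | F^[n] c = const q}` are closed and, by nilpotency, cover the configuration space,
which is a Baire space; so one of them contains a cylinder `[w]_k`. Since `F^[n]` commutes with
`shift^[k]`, and `shift^[k]` maps `[w]_k` onto the whole space while fixing `const q`, that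
single `n` works for every configuration.
-/

/-- The one-sided shift map `σ(c)(i) = c(i+1)`. -/
def shift {A : Type*} (c : ℕ → A) : ℕ → A := fun i => c (i + 1)

theorem exists_cylinder_subset_of_iUnion_eq_univ {E : ℕ → Type*} [∀ n, TopologicalSpace (E n)]
    [∀ n, DiscreteTopology (E n)] [∀ n, Nonempty (E n)] {ι : Type*} [Countable ι]
    {U : ι → Set (∀ n, E n)} (hclosed : ∀ i, IsClosed (U i)) (hcover : ⋃ i, U i = Set.univ) :
    ∃ i w k, PiNat.cylinder w k ⊆ U i := by
  obtain ⟨i, c, hc⟩ := nonempty_interior_of_iUnion_of_closed hclosed hcover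
  obtain ⟨_, ⟨w, k, rfl⟩, -, hsub⟩ :=
    (PiNat.isTopologicalBasis_cylinders E).exists_subset_of_mem_open hc isOpen_interior
  exact ⟨i, w, k, hsub.trans interior_subset⟩

section Shift

variable {A : Type*}

theorem shift_iterate_apply (c : ℕ → A) (k i : ℕ) : shift^[k] c i = c (i + k) := by
  induction k generalizing c with
  | zero => rfl
  | succ k ih => rw [Function.iterate_succ_apply, ih]; simp only [shift]; ring_nf

theorem shift_iterate_const (k : ℕ) (a : A) : shift^[k] (fun _ : ℕ => a) = fun _ => a :=
  funext fun i => shift_iterate_apply _ k i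

/-- Prepending the first `k` letters of `w` to `c` gives a preimage of `c` in `[w]_k`. -/
theorem surjOn_shift_iterate_cylinder (w : ℕ → A) (k : ℕ) :
    Set.SurjOn shift^[k] (PiNat.cylinder w k) Set.univ := by
  intro c _
  refine ⟨fun i => if i < k then w i else c (i - k), fun i hi => if_pos hi, funext fun i => ?_⟩
  simp [shift_iterate_apply]

theorem eq_const_of_commute_shift_of_cylinder {G : (ℕ → A) → ℕ → A}
    (hG : Function.Commute G shift) {w : ℕ → A} {k : ℕ} {a : A}
    (hw : ∀ c ∈ PiNat.cylinder w k, G c = fun _ => a) (c : ℕ → A) :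
    G c = fun _ => a := by
  obtain ⟨c', hc', rfl⟩ := surjOn_shift_iterate_cylinder w k (Set.mem_univ c)
  rw [(hG.iterate_right k).eq, hw c' hc', shift_iterate_const]

end Shift

theorem nilpotent_CA_uniformly_nilpotent_general
    {A : Type} [TopologicalSpace A] [DiscreteTopology A]
    (F : (ℕ → A) → ℕ → A) (hcont : Continuous F) (hshift : F ∘ shift = shift ∘ F)
    (q : A)
    -- `F` is nilpotent with quiescent state `q`
    (hnilp : ∀ c : ℕ → A, ∃ n : ℕ, F^[n] c = fun _ => q) :
    ∃ n : ℕ, ∀ c : ℕ → A, F^[n] c = fun _ => q := by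
  have : Nonempty A := ⟨q⟩
  obtain ⟨n, w, k, hsub⟩ := exists_cylinder_subset_of_iUnion_eq_univ
    (U := fun n => F^[n] ⁻¹' {fun _ => q})
    (fun n => isClosed_singleton.preimage (hcont.iterate n)) (Set.iUnion_eq_univ_iff.2 hnilp)
  have hcomm : Function.Commute F shift := fun c => congrFun hshift c
  exact ⟨n, eq_const_of_commute_shift_of_cylinder (hcomm.iterate_left n) hsub⟩

/-- A nilpotent one-sided cellular automaton over a finite alphabet is uniformly nilpotent:
if every configuration reaches the quiescent constant configuration `const q` after finitely
many steps, then there is a single `n` that works for all configurations. -/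
theorem nilpotent_CA_uniformly_nilpotent
    {A : Type} [Fintype A] [Nonempty A] [TopologicalSpace A] [DiscreteTopology A]
    (F : (ℕ → A) → ℕ → A) (hcont : Continuous F) (hshift : F ∘ shift = shift ∘ F)
    (q : A)
    -- `q` is quiescent
    (hq : F (fun _ => q) = fun _ => q)
    -- `F` is nilpotent with quiescent state `q`
    (hnilp : ∀ c : ℕ → A, ∃ n : ℕ, F^[n] c = fun _ => q) :
    ∃ n : ℕ, ∀ c : ℕ → A, F^[n] c = fun _ => q :=
  nilpotent_CA_uniformly_nilpotent_general F hcont hshift q hnilp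
end

section
/- Let F be a one-sided CA over a finite alphabet A of radius r with r ≥ 1. Then the topological entropy of F equals the topological entropy of the shift on its r-th trace subshift: h((ℕ → A), F) = h(τ_r(F), σ). -/
/-- The `n`-th trace subshift of `F`: the set of sequences of width-`n` windows
`i ↦ (F^i(c)(0), …, F^i(c)(n-1))` read off orbits of `F`. -/
def traceSubshift {A : Type*} (F : (ℕ → A) → ℕ → A) (n : ℕ) : Set (ℕ → (Fin n → A)) :=
  { t | ∃ c : ℕ → A, ∀ (i : ℕ) (k : Fin n), t i k = F^[i] c (k : ℕ) }

/-!
For the entourages "agree on the first `m` coordinates", minimal dynamical covers count the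
`n × m` windows of space-time diagrams, so every entropy in sight is the exponential growth rate
of a window count. For a cellular automaton of radius `r`, widening a window of width `m ≥ r`
by one column multiplies the count by at most `|A|`: the new leftmost column is determined row
by row by its top cell and the old columns. Hence the entropy of `F` is the growth rate of the
`n × r` window counts. On any subshift an `n × m` window is read off an `(n + m) × 1` window,
and there are at most `|B|^m` times more of those than of `n × 1` windows, so the entropy of the
shift is the growth rate of the `n × 1` window counts; on the trace subshift these are exactly
the `n × r` windows of `F`.
-/

open Filter Set Dynamics Function
open scoped Uniformity

theorem Set.ncard_image_le_of_factorsThrough {α β γ : Type*} {f : α → β} {g : α → γ}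
    (h : f.FactorsThrough g) (s : Set α) (hs : (g '' s).Finite := by toFinite_tac) :
    (f '' s).ncard ≤ (g '' s).ncard := by
  rcases s.eq_empty_or_nonempty with rfl | ⟨a, -⟩
  · simp
  calc (f '' s).ncard = (extend g f (fun _ => f a) '' (g '' s)).ncard := by
        rw [image_image]
        exact congrArg ncard (image_congr fun x _ => (h.extend_apply _ x).symm)
    _ ≤ (g '' s).ncard := ncard_image_le hs

theorem Dynamics.coverMincard_eq_ncard_image {X Y : Type*} {T : X → X} {U : SetRel X X} {n : ℕ}
    {g : X → Y} (hg : ∀ x y, (x, y) ∈ dynEntourage T U n ↔ g x = g y) (S : Set X)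
    (hS : (g '' S).Finite) : coverMincard T S U n = (g '' S).ncard := by
  classical
  refine le_antisymm ?_ (le_iInf₂ fun s hs => ?_)
  · obtain ⟨u, -, hu⟩ := S.exists_subset_bijOn g
    have hu_fin : u.Finite := Finite.of_finite_image (hu.image_eq ▸ hS) hu.injOn
    have hcover : IsDynCoverOf T S U n hu_fin.toFinset := fun x hx => by
      obtain ⟨y, hy, hyx⟩ := hu.surjOn (mem_image_of_mem g hx)
      exact ⟨y, hu_fin.mem_toFinset.2 hy, (hg x y).2 hyx.symm⟩
    refine hcover.coverMincard_le_card.trans_eq ?_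
    rw [← ncard_eq_toFinset_card u hu_fin, ← hu.image_eq, hu.injOn.ncard_image]
  · have hsub : g '' S ⊆ g '' s := by
      rintro _ ⟨x, hx, rfl⟩
      obtain ⟨y, hy, hxy⟩ := hs hx
      exact ⟨y, hy, ((hg x y).1 hxy).symm⟩
    have hcard := (ncard_le_ncard hsub (s.finite_toSet.image g)).trans
      (ncard_image_le s.finite_toSet)
    rw [ncard_coe_finset] at hcard
    exact_mod_cast hcard

section Windows

variable {B : Type*}

def orbitWindow (T : (ℕ → B) → ℕ → B) (n m : ℕ) (x : ℕ → B) : Fin n → Fin m → B :=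
  fun j i => T^[j] x i

def cylinderEntourage (B : Type*) (m : ℕ) : SetRel (ℕ → B) (ℕ → B) :=
  {p | ∀ i < m, p.1 i = p.2 i}

theorem mem_dynEntourage_cylinderEntourage_iff {T : (ℕ → B) → ℕ → B} {n m : ℕ} {x y : ℕ → B} :
    (x, y) ∈ dynEntourage T (cylinderEntourage B m) n ↔
      orbitWindow T n m x = orbitWindow T n m y := by
  rw [mem_dynEntourage]
  refine ⟨fun h => funext fun j => funext fun i => h j j.2 i i.2, fun h j hj i hi => ?_⟩
  exact congrFun (congrFun h ⟨j, hj⟩) ⟨i, hi⟩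

theorem hasBasis_uniformity_cylinderEntourage [UniformSpace B] [DiscreteUniformity B] :
    (𝓤 (ℕ → B)).HasBasis (fun _ => True) (cylinderEntourage B) := by
  have h : 𝓤 (ℕ → B) = ⨅ i : ℕ, 𝓟 {p : (ℕ → B) × (ℕ → B) | p.1 i = p.2 i} := by
    simp only [Pi.uniformity, DiscreteUniformity.eq_principal_setRelId, comap_principal]
    rfl
  rw [h]
  refine (hasBasis_iInf_principal_finite _).to_hasBasis (fun t ht => ?_) fun m _ => ?_
  · obtain ⟨m, hm⟩ := ht.bddAbove
    exact ⟨m + 1, trivial, fun p hp => mem_iInter₂.2 fun i hi => hp i (Nat.lt_succ_of_le (hm hi))⟩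
  · exact ⟨Iio m, finite_Iio m, fun p hp i hi => mem_iInter₂.1 hp i hi⟩

theorem coverEntropyEntourage_cylinderEntourage [Finite B] (T : (ℕ → B) → ℕ → B)
    (S : Set (ℕ → B)) (m : ℕ) :
    coverEntropyEntourage T S (cylinderEntourage B m) =
      ExpGrowth.expGrowthSup fun n => ((orbitWindow T n m '' S).ncard : ENNReal) := by
  simp only [coverEntropyEntourage,
    coverMincard_eq_ncard_image (fun _ _ => mem_dynEntourage_cylinderEntourage_iff) S (toFinite _),
    ENat.toENNReal_coe]

theorem coverEntropy_eq_coverEntropyEntourage_cylinderEntourage [UniformSpace B]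
    [DiscreteUniformity B] [Finite B] {T : (ℕ → B) → ℕ → B} {S : Set (ℕ → B)} {m₀ : ℕ}
    (h : ∀ m, ∃ C : ℕ, ∀ n,
      (orbitWindow T n m '' S).ncard ≤ C * (orbitWindow T n m₀ '' S).ncard) :
    coverEntropy T S = coverEntropyEntourage T S (cylinderEntourage B m₀) := by
  refine le_antisymm ?_ (coverEntropyEntourage_le_coverEntropy T S
    (hasBasis_uniformity_cylinderEntourage.mem_of_mem trivial))
  rw [coverEntropy_eq_iSup_basis hasBasis_uniformity_cylinderEntourage]
  refine iSup₂_le fun m _ => ?_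
  obtain ⟨C, hC⟩ := h m
  simp only [coverEntropyEntourage_cylinderEntourage]
  exact ExpGrowth.expGrowthSup_le_of_eventually_le (ENNReal.natCast_ne_top C)
    (Eventually.of_forall fun n => by exact_mod_cast hC n)

theorem orbitWindow_factorsThrough_of_le (T : (ℕ → B) → ℕ → B) (n : ℕ) {m m' : ℕ}
    (hm : m ≤ m') : (orbitWindow T n m).FactorsThrough (orbitWindow T n m') :=
  fun _ _ h => funext fun j => funext fun i => congrFun (congrFun h j) (Fin.castLE hm i)

theorem ncard_image_orbitWindow_add_le [Finite B] (T : (ℕ → B) → ℕ → B) (S : Set (ℕ → B))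
    (n m k : ℕ) :
    (orbitWindow T (n + k) m '' S).ncard ≤
      (orbitWindow T n m '' S).ncard * Nat.card (Fin k → Fin m → B) := by
  have hfac : (orbitWindow T (n + k) m).FactorsThrough
      fun x => (orbitWindow T n m x, orbitWindow T k m (T^[n] x)) := by
    intro x y hxy
    obtain ⟨hfirst, hlast⟩ := Prod.mk.inj hxy
    funext j i
    rcases lt_or_ge (j : ℕ) n with hj | hj
    · exact congrFun (congrFun hfirst ⟨j, hj⟩) i
    · obtain ⟨l, hl⟩ := Nat.exists_eq_add_of_le hj
      have := congrFun (congrFun hlast ⟨l, by omega⟩) i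
      simpa only [orbitWindow, hl, add_comm n l, iterate_add_apply] using this
  calc (orbitWindow T (n + k) m '' S).ncard
      ≤ ((fun x => (orbitWindow T n m x, orbitWindow T k m (T^[n] x))) '' S).ncard :=
        ncard_image_le_of_factorsThrough hfac S
    _ ≤ ((orbitWindow T n m '' S) ×ˢ univ).ncard :=
        ncard_le_ncard (by rintro _ ⟨x, hx, rfl⟩; exact ⟨mem_image_of_mem _ hx, trivial⟩)
    _ = _ := by rw [ncard_prod, ncard_univ]

theorem shift_iterate_apply_s9 (t : ℕ → B) (j i : ℕ) : shift^[j] t i = t (i + j) := by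
  induction j generalizing t with
  | zero => rfl
  | succ j ih => rw [iterate_succ_apply, ih, shift, Nat.add_assoc]

theorem orbitWindow_shift_factorsThrough (n m : ℕ) :
    (orbitWindow (shift (A := B)) n m).FactorsThrough (orbitWindow shift (n + m) 1) := by
  intro s t h
  funext j i
  have := congrFun (congrFun h ⟨i + j, by omega⟩) 0
  simpa only [orbitWindow, shift_iterate_apply_s9, Fin.val_zero, zero_add] using this

theorem coverEntropy_shift_eq [UniformSpace B] [DiscreteUniformity B] [Finite B]
    (S : Set (ℕ → B)) :
    coverEntropy shift S = coverEntropyEntourage shift S (cylinderEntourage B 1) :=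
  coverEntropy_eq_coverEntropyEntourage_cylinderEntourage fun m =>
    ⟨Nat.card (Fin m → Fin 1 → B), fun n =>
      (ncard_image_le_of_factorsThrough (orbitWindow_shift_factorsThrough n m) S).trans
        ((ncard_image_orbitWindow_add_le shift S n 1 m).trans_eq (mul_comm _ _))⟩

end Windows

section CellularAutomaton

variable {A : Type*} {r : ℕ} {f : (Fin (r + 1) → A) → A} {F : (ℕ → A) → ℕ → A}

theorem commute_shift_of_localRule (hF : ∀ c i, F c i = f fun k => c (i + (k : ℕ))) :
    Function.Commute F shift := fun c => funext fun i => by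
  simp only [hF, shift, Nat.add_right_comm]

theorem orbitWindow_succ_factorsThrough (hF : ∀ c i, F c i = f fun k => c (i + (k : ℕ)))
    {n m : ℕ} (hm : r ≤ m) :
    (orbitWindow F n (m + 1)).FactorsThrough fun c => (c 0, orbitWindow F n m (shift c)) := by
  intro c c' h
  obtain ⟨h0, hw⟩ := Prod.mk.inj h
  have hright : ∀ j < n, ∀ i < m, F^[j] c (i + 1) = F^[j] c' (i + 1) := fun j hj i hi => by
    have := congrFun (congrFun hw ⟨j, hj⟩) ⟨i, hi⟩
    simpa only [orbitWindow, ((commute_shift_of_localRule hF).iterate_left j) _, shift] using this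
  have hrows : ∀ j < n, ∀ i ≤ m, F^[j] c i = F^[j] c' i := by
    intro j
    induction j with
    | zero =>
      rintro hn (_ | i) hi
      exacts [h0, hright 0 hn i (by omega)]
    | succ j ih =>
      rintro hj (_ | i) hi
      · simp only [iterate_succ_apply', hF]
        exact congrArg f (funext fun k => ih (by omega) _ (by omega))
      · exact hright _ hj i (by omega)
  exact funext fun j => funext fun i => hrows j j.2 i (by omega)

theorem ncard_image_orbitWindow_succ_le [Finite A]
    (hF : ∀ c i, F c i = f fun k => c (i + (k : ℕ))) {n m : ℕ} (hm : r ≤ m) :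
    (orbitWindow F n (m + 1) '' univ).ncard ≤ Nat.card A * (orbitWindow F n m '' univ).ncard :=
  calc (orbitWindow F n (m + 1) '' univ).ncard
      ≤ ((fun c => (c 0, orbitWindow F n m (shift c))) '' univ).ncard :=
        ncard_image_le_of_factorsThrough (orbitWindow_succ_factorsThrough hF hm) univ
    _ ≤ (univ ×ˢ (orbitWindow F n m '' univ)).ncard :=
        ncard_le_ncard (by rintro _ ⟨c, -, rfl⟩; exact ⟨trivial, mem_image_of_mem _ trivial⟩)
    _ = _ := by rw [ncard_prod, ncard_univ]

theorem ncard_image_orbitWindow_radius_add_le [Finite A]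
    (hF : ∀ c i, F c i = f fun k => c (i + (k : ℕ))) (n k : ℕ) :
    (orbitWindow F n (r + k) '' univ).ncard ≤
      Nat.card A ^ k * (orbitWindow F n r '' univ).ncard := by
  induction k with
  | zero => simp
  | succ k ih =>
    calc (orbitWindow F n (r + k + 1) '' univ).ncard
        ≤ Nat.card A * (orbitWindow F n (r + k) '' univ).ncard :=
          ncard_image_orbitWindow_succ_le hF (Nat.le_add_right r k)
      _ ≤ Nat.card A * (Nat.card A ^ k * (orbitWindow F n r '' univ).ncard) :=
          Nat.mul_le_mul_left _ ih
      _ = Nat.card A ^ (k + 1) * (orbitWindow F n r '' univ).ncard := by ring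

theorem coverEntropy_univ_eq_of_localRule [UniformSpace A] [DiscreteUniformity A] [Finite A]
    (hF : ∀ c i, F c i = f fun k => c (i + (k : ℕ))) :
    coverEntropy F univ = coverEntropyEntourage F univ (cylinderEntourage A r) :=
  coverEntropy_eq_coverEntropyEntourage_cylinderEntourage fun m =>
    ⟨Nat.card A ^ m, fun n =>
      (ncard_image_le_of_factorsThrough (orbitWindow_factorsThrough_of_le F n
        (Nat.le_add_left m r)) univ).trans (ncard_image_orbitWindow_radius_add_le hF n m)⟩

theorem ncard_image_orbitWindow_traceSubshift (F : (ℕ → A) → ℕ → A) (n r : ℕ) :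
    (orbitWindow shift n 1 '' traceSubshift F r).ncard = (orbitWindow F n r '' univ).ncard := by
  have himage : orbitWindow shift n 1 '' traceSubshift F r =
      (fun w j _ => w j) '' (orbitWindow F n r '' univ) := by
    ext q
    constructor
    · rintro ⟨t, ⟨c, hc⟩, rfl⟩
      refine ⟨orbitWindow F n r c, mem_image_of_mem _ trivial, ?_⟩
      funext j i k
      simp [orbitWindow, shift_iterate_apply_s9, hc]
    · rintro ⟨_, ⟨c, -, rfl⟩, rfl⟩
      exact ⟨fun i k => F^[i] c k, ⟨c, fun _ _ => rfl⟩, by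
        funext j i k
        simp [orbitWindow, shift_iterate_apply_s9]⟩
  rw [himage, ncard_image_of_injective _ fun w w' h => funext fun j => congrFun (congrFun h j) 0]

end CellularAutomaton

theorem entropy_eq_entropy_of_radius_trace_general
    {A : Type} [Fintype A] [UniformSpace A] [DiscreteTopology A]
    {r : ℕ}
    (f : (Fin (r + 1) → A) → A) (F : (ℕ → A) → ℕ → A)
    (hF : ∀ c i, F c i = f fun k => c (i + (k : ℕ))) :
    Dynamics.coverEntropy F Set.univ =
      Dynamics.coverEntropy (shift (A := Fin r → A)) (traceSubshift F r) := by
  rw [coverEntropy_univ_eq_of_localRule hF, coverEntropy_shift_eq,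
    coverEntropyEntourage_cylinderEntourage, coverEntropyEntourage_cylinderEntourage]
  simp only [ncard_image_orbitWindow_traceSubshift]

/-- For a one-sided CA `F` of radius `r ≥ 1` over a finite alphabet, the topological entropy
of `F` equals the topological entropy of the shift on the `r`-th trace subshift. -/
theorem entropy_eq_entropy_of_radius_trace
    {A : Type} [Fintype A] [Nonempty A] [UniformSpace A] [DiscreteTopology A]
    {r : ℕ} (hr : 1 ≤ r)
    (f : (Fin (r + 1) → A) → A) (F : (ℕ → A) → ℕ → A)
    (hF : ∀ c i, F c i = f fun k => c (i + (k : ℕ))) :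
    Dynamics.coverEntropy F Set.univ =
      Dynamics.coverEntropy (shift (A := Fin r → A)) (traceSubshift F r) :=
  entropy_eq_entropy_of_radius_trace_general f F hF
end

section
/- Let A = Fin 3 with elements 0, 1, 2, and let F be the radius-1 one-sided CA over A with F(c)(i) = ρ_{c(i+1)}(c(i)), where ρ₀ = ρ₂ swaps 1 and 2 (fixing 0) and ρ₁ is the 3-cycle 0↦1, 1↦2, 2↦0. If t ∈ τ₁(F) and there are indices i and n ≥ 0 such that t(i) = 2, t(j) = 0 for all i < j ≤ i + n, and t(i + n + 1) = 1 (i.e., the word 2·0ⁿ·1 occurs in t), then n is even. -/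
/-- The permutations `ρ₀ = ρ₂ = (0)(12)` and `ρ₁ = (012)` (i.e. `0↦1, 1↦2, 2↦0`),
as a family indexed by the right neighbor: `rho b x = ρ_b(x)`. -/
def rho : Fin 3 → Fin 3 → Fin 3 := ![![0, 2, 1], ![1, 2, 0], ![0, 2, 1]]

/-- The radius-1 one-sided CA `F(c)(i) = ρ_{c(i+1)}(c(i))` of the example. -/
def Fex : (ℕ → Fin 3) → ℕ → Fin 3 := fun c i => rho (c (i + 1)) (c i)

/-- The first trace subshift of `F`, identified with a subset of `(Fin 3)^ℕ`. -/
def trace1 (F : (ℕ → Fin 3) → ℕ → Fin 3) : Set (ℕ → Fin 3) :=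
  { t | ∃ c : ℕ → Fin 3, ∀ i : ℕ, t i = F^[i] c 0 }

/-!
Write `u p k = F^k(c)(p)` for the space-time diagram. Column `p` is driven by column `p + 1`:
`u p (k + 1) = ρ_{u (p+1) k} (u p k)`. Reading off `ρ`, a window `2·0ⁿ·1` (n ≥ 1) in column `p`
forces column `p + 1` to be `1` at both ends and `≠ 1` strictly inside; since `ρ_b(1) = 2` and
`ρ_b` maps `{0, 2}` into `{0, 1}`, column `p + 1` then carries the window `2·0ⁿ⁻²·1`, one time step
later. The length drops by two at each column, and length `1` is impossible.
-/

def DrivenBy (u v : ℕ → Fin 3) : Prop :=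
  ∀ k, u (k + 1) = rho (v k) (u k)

def TwoZerosOneAt (u : ℕ → Fin 3) (s n : ℕ) : Prop :=
  u s = 2 ∧ (∀ j, s < j → j ≤ s + n → u j = 0) ∧ u (s + n + 1) = 1

lemma rho_two_eq_zero_iff (b : Fin 3) : rho b 2 = 0 ↔ b = 1 := by
  revert b; decide

lemma rho_zero_eq_zero_iff (b : Fin 3) : rho b 0 = 0 ↔ b ≠ 1 := by
  revert b; decide

lemma rho_zero_eq_one_iff (b : Fin 3) : rho b 0 = 1 ↔ b = 1 := by
  revert b; decide

lemma rho_one (b : Fin 3) : rho b 1 = 2 := by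
  revert b; decide

lemma rho_eq_zero_of_ne_one {b x : Fin 3} (hx : x ≠ 1) (h : rho b x ≠ 1) : rho b x = 0 := by
  revert b x; decide

lemma drivenBy_iterate_Fex (c : ℕ → Fin 3) (p : ℕ) :
    DrivenBy (fun k => Fex^[k] c p) (fun k => Fex^[k] c (p + 1)) := fun k => by
  simp only [Function.iterate_succ_apply']
  rfl

section DrivenBy

variable {u v w : ℕ → Fin 3}

lemma DrivenBy.eq_two_of_eq_one (hv : DrivenBy v w) {s : ℕ} (h : v s = 1) : v (s + 1) = 2 := by
  rw [hv, h, rho_one]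

lemma DrivenBy.eq_zero_of_ne_one (hv : DrivenBy v w) {k : ℕ} (hk : v k ≠ 1)
    (hk' : v (k + 1) ≠ 1) : v (k + 1) = 0 := by
  rw [hv] at hk' ⊢
  exact rho_eq_zero_of_ne_one hk hk'

lemma DrivenBy.driver_of_twoZerosOneAt (hu : DrivenBy u v) {s n : ℕ}
    (h : TwoZerosOneAt u s (n + 1)) :
    v s = 1 ∧ (∀ j, s < j → j ≤ s + n → v j ≠ 1) ∧ v (s + n + 1) = 1 := by
  obtain ⟨h2, h0, h1⟩ := h
  have hzero : ∀ j, s < j → j ≤ s + n + 1 → u j = 0 := fun j hj hj' => h0 j hj (by omega)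
  refine ⟨?_, fun j hj hj' => ?_, ?_⟩
  · have := hu s
    rw [h2, hzero (s + 1) (by omega) (by omega)] at this
    exact (rho_two_eq_zero_iff _).1 this.symm
  · have := hu j
    rw [hzero j hj (by omega), hzero (j + 1) (by omega) (by omega)] at this
    exact (rho_zero_eq_zero_iff _).1 this.symm
  · have := hu (s + n + 1)
    rw [hzero _ (by omega) le_rfl, show s + n + 1 + 1 = s + (n + 1) + 1 by omega, h1] at this
    exact (rho_zero_eq_one_iff _).1 this.symm

lemma DrivenBy.not_twoZerosOneAt_one (hu : DrivenBy u v) (hv : DrivenBy v w) (s : ℕ) :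
    ¬ TwoZerosOneAt u s 1 := fun h => by
  obtain ⟨hs, -, hs1⟩ := hu.driver_of_twoZerosOneAt h
  exact absurd (hs1.symm.trans (hv.eq_two_of_eq_one hs)) (by decide)

lemma DrivenBy.twoZerosOneAt_driver (hu : DrivenBy u v) (hv : DrivenBy v w) {s m : ℕ}
    (h : TwoZerosOneAt u s (m + 2)) : TwoZerosOneAt v (s + 1) m := by
  obtain ⟨hs, hne, hend⟩ := hu.driver_of_twoZerosOneAt h
  have hzero : ∀ j, s + 1 < j → j ≤ s + 1 + m → v j = 0 := by
    intro j hj hj'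
    obtain ⟨k, rfl⟩ : ∃ k, j = k + 1 := ⟨j - 1, by omega⟩
    refine hv.eq_zero_of_ne_one ?_ (hne _ (by omega) (by omega))
    exact hne k (by omega) (by omega)
  exact ⟨hv.eq_two_of_eq_one hs, hzero, by rwa [show s + 1 + m + 1 = s + (m + 1) + 1 by omega]⟩

end DrivenBy

lemma even_of_twoZerosOneAt {u : ℕ → ℕ → Fin 3} (hu : ∀ p, DrivenBy (u p) (u (p + 1)))
    {p s n : ℕ} (h : TwoZerosOneAt (u p) s n) : Even n := by
  induction n using Nat.strong_induction_on generalizing p s with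
  | _ n ih =>
    match n, ih, h with
    | 0, _, _ => exact Even.zero
    | 1, _, h => exact absurd h ((hu p).not_twoZerosOneAt_one (hu (p + 1)) s)
    | m + 2, ih, h =>
      exact (ih m (by omega) ((hu p).twoZerosOneAt_driver (hu (p + 1)) h)).add even_two

/-- If the word `2·0ⁿ·1` occurs in an element of the first trace subshift of the example CA,
then `n` is even. -/
theorem even_zero_run_between_two_and_one
    (t : ℕ → Fin 3) (ht : t ∈ trace1 Fex) (i n : ℕ)
    (h2 : t i = 2)
    (h0 : ∀ j : ℕ, i < j → j ≤ i + n → t j = 0)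
    (h1 : t (i + n + 1) = 1) :
    Even n := by
  obtain ⟨c, hc⟩ := ht
  refine even_of_twoZerosOneAt (u := fun p k => Fex^[k] c p) (p := 0) (s := i)
    (drivenBy_iterate_Fex c) ?_
  simp only [TwoZerosOneAt, ← hc]
  exact ⟨h2, h0, h1⟩
end
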